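/- arXiv:2008.11066 — 8 statements merged into one kernel-verified Lean document; each statement's English description precedes it below -/
import Mathlib

section
/- Forward modularity of derivations: Let C be an adhesive category, let α : L ⇀ R, β : G ⇀ H, γ : S ⇀ T be rules and let f₁ : L ⟶ S, f₂ : S ⟶ G, g : R ⟶ H, g₁ : R ⟶ T be matches such that (f₂ ∘ f₁) ⇒[α] g with corule β and f₁ ⇒[α] g₁ with corule γ. Then there exists a unique match g₂ : T ⟶ H such that g₂ ∘ g₁ = g and f₂ ⇒[γ] g₂ with corule β. -/
/-!
Finality of the FPBC `k` of the composite match `f₁ ≫ f₂`, tested against the FPBC `m` of `f₁`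
pasted with the mono `f₂`, yields `n : γ.K ⟶ β.K` with `m ≫ n = k`. The square spanned by `n`
over `f₂` is again an FPBC: any pullback over `f₂` whose corner factors through `γ.left`
becomes, after pulling back along `f₁`, a pullback over `f₁ ≫ f₂`, to which finality of `k`
applies. By pushout pasting, the pushout square of the first derivation splits into that of
the second followed by a pushout of `n`, whose fourth side is `g₂`; it is mono by adhesivity.
Uniqueness: `β.left` is mono, so `n` is forced, and `g₂` is determined on the pushout `T`.
-/

open CategoryTheory Limits

universe v u

variable {C : Type u} [Category.{v} C]

/-- `IsFPBC f₁ f₂ g₁ g₂` states that `(g₁ : X ⟶ W, g₂ : W ⟶ Z)` is a final pullback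
complement of the composable pair `(f₁ : X ⟶ Y, f₂ : Y ⟶ Z)`. -/
structure IsFPBC {X Y Z W : C} (f₁ : X ⟶ Y) (f₂ : Y ⟶ Z) (g₁ : X ⟶ W) (g₂ : W ⟶ Z) :
    Prop where
  isPullback : IsPullback f₁ g₁ f₂ g₂
  final : ∀ {P Q : C} (f₁' : P ⟶ Y) (g₁' : P ⟶ Q) (g₂' : Q ⟶ Z),
      IsPullback f₁' g₁' f₂ g₂' → ∀ p : P ⟶ X, p ≫ f₁ = f₁' →
      ∃! u : Q ⟶ W, u ≫ g₂ = g₂' ∧ g₁' ≫ u = p ≫ g₁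

/-- A rule `L ⇀ R` is a span of monomorphisms. -/
structure Rule (L R : C) where
  K : C
  left : K ⟶ L
  right : K ⟶ R
  mono_left : Mono left
  mono_right : Mono right

/-- The reverse `α† : R ⇀ L` of a rule `α : L ⇀ R`. -/
def Rule.rev {L R : C} (α : Rule L R) : Rule R L :=
  ⟨α.K, α.right, α.left, α.mono_right, α.mono_left⟩

/-- `IsDerivation α f g β`: the comatch `g : R ⟶ H` is derived from the match `f : L ⟶ G`
by the rule `α : L ⇀ R`, with corule `β : G ⇀ H`. -/
def IsDerivation {L R G H : C} (α : Rule L R) (f : L ⟶ G) (g : R ⟶ H) (β : Rule G H) :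
    Prop :=
  ∃ h : α.K ⟶ β.K, Mono h ∧ IsFPBC α.left f h β.left ∧ IsPushout α.right h g β.right

/-- A match `g : R ⟶ H` is derivable by a rule `α : L ⇀ R` if `f ⇒[α] g` for some match `f`. -/
def Derivable {L R H : C} (α : Rule L R) (g : R ⟶ H) : Prop :=
  ∃ (G : C) (f : L ⟶ G) (β : Rule G H), Mono f ∧ IsDerivation α f g β

/-- A gluing of `G₁` and `G₂`: a cospan of monomorphisms. -/
structure Gluing (G₁ G₂ : C) where
  U : C
  i₁ : G₁ ⟶ U
  i₂ : G₂ ⟶ U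
  mono₁ : Mono i₁
  mono₂ : Mono i₂

/-- A gluing is minimal if every monomorphism through which both legs factor is an iso. -/
def Gluing.Minimal {G₁ G₂ : C} (gl : Gluing G₁ G₂) : Prop :=
  ∀ (V : C) (m : V ⟶ gl.U), Mono m →
    (∃ j₁ : G₁ ⟶ V, j₁ ≫ m = gl.i₁) → (∃ j₂ : G₂ ⟶ V, j₂ ≫ m = gl.i₂) → IsIso m

/-- Two gluings are isomorphic if there is an isomorphism of their tips commuting
with the legs. -/
def GluingIso {G₁ G₂ : C} (g h : Gluing G₁ G₂) : Prop :=
  ∃ u : g.U ≅ h.U, g.i₁ ≫ u.hom = h.i₁ ∧ g.i₂ ≫ u.hom = h.i₂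

/-- The set (type) of matches (monomorphisms) from `A` to `B`. -/
abbrev Mchs (A B : C) := {f : A ⟶ B // Mono f}

lemma CategoryTheory.IsPullback.comp_mono {P X Y Z W : C} {a : P ⟶ X} {b : P ⟶ Y} {f : X ⟶ Z}
    {g : Y ⟶ Z} (h : IsPullback a b f g) (e : Z ⟶ W) [Mono e] :
    IsPullback a b (f ≫ e) (g ≫ e) :=
  .of_isLimit (PullbackCone.isLimitOfCompMono f g e _ h.isLimit)

namespace IsFPBC

variable {X Y Z W : C} {f₁ : X ⟶ Y} {f₂ : Y ⟶ Z} {g₁ : X ⟶ W} {g₂ : W ⟶ Z}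

lemma exists_lift (h : IsFPBC f₁ f₂ g₁ g₂) {Q : C} {g₁' : X ⟶ Q} {g₂' : Q ⟶ Z}
    (h' : IsPullback f₁ g₁' f₂ g₂') : ∃ u : Q ⟶ W, u ≫ g₂ = g₂' ∧ g₁' ≫ u = g₁ := by
  obtain ⟨u, ⟨hu₂, hu₁⟩, -⟩ := h.final f₁ g₁' g₂' h' (𝟙 X) (Category.id_comp f₁)
  exact ⟨u, hu₂, by simpa using hu₁⟩

lemma of_mono [Mono g₂] (h : IsPullback f₁ g₁ f₂ g₂)
    (lift : ∀ {P Q : C} (f₁' : P ⟶ Y) (g₁' : P ⟶ Q) (g₂' : Q ⟶ Z),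
      IsPullback f₁' g₁' f₂ g₂' → ∀ p : P ⟶ X, p ≫ f₁ = f₁' → ∃ u : Q ⟶ W, u ≫ g₂ = g₂') :
    IsFPBC f₁ f₂ g₁ g₂ := by
  refine ⟨h, fun f₁' g₁' g₂' h' p hp => ?_⟩
  obtain ⟨u, hu⟩ := lift f₁' g₁' g₂' h' p hp
  refine ⟨u, ⟨hu, ?_⟩, fun u' hu' => by rw [← cancel_mono g₂, hu'.1, hu]⟩
  rw [← cancel_mono g₂, Category.assoc, hu, Category.assoc, ← h.w, ← Category.assoc, hp, h'.w]

end IsFPBC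

section Decomposition

variable {A L S G K' K : C} {a : A ⟶ L} {f₁ : L ⟶ S} {f₂ : S ⟶ G} {m : A ⟶ K'} {c : K' ⟶ S}
  {k : A ⟶ K} {b : K ⟶ G} {n : K' ⟶ K}

/-- Finality of the left FPBC makes the pullback of `b` along `f₂` the same subobject of `S`
as `c`. -/
lemma IsFPBC.isPullback_of_isPullback_comp [HasPullback f₂ b] [Mono c] [Mono b]
    (hleft : IsFPBC a f₁ m c) (hout : IsPullback a k (f₁ ≫ f₂) b) (hn : n ≫ b = c ≫ f₂) :
    IsPullback c n f₂ b := by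
  have hw : IsPullback a (pullback.lift (a ≫ f₁) k (by simpa using hout.w)) f₁
      (pullback.fst f₂ b) :=
    .of_bot (by rwa [pullback.lift_snd]) (pullback.lift_fst _ _ _).symm (.of_hasPullback f₂ b)
  obtain ⟨u, hu, -⟩ := hleft.exists_lift hw
  have hvu : pullback.lift c n hn.symm ≫ u = 𝟙 K' := by
    rw [← cancel_mono c, Category.assoc, hu, pullback.lift_fst, Category.id_comp]
  have huv : u ≫ pullback.lift c n hn.symm = 𝟙 (pullback f₂ b) := by
    refine pullback.hom_ext ?_ ?_
    · rw [Category.assoc, pullback.lift_fst, hu, Category.id_comp]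
    · rw [← cancel_mono b]
      simp only [Category.assoc, Category.id_comp, pullback.lift_snd_assoc, hn]
      rw [reassoc_of% hu, pullback.condition]
  exact .of_iso_pullback ⟨hn.symm⟩ ⟨_, u, hvu, huv⟩ (pullback.lift_fst _ _ _)
    (pullback.lift_snd _ _ _)

lemma IsFPBC.of_isFPBC_comp [HasPullbacksAlong f₁] [Mono b] (hout : IsFPBC a (f₁ ≫ f₂) k b)
    (hleft : IsPullback a m f₁ c) (hright : IsPullback c n f₂ b) : IsFPBC c f₂ n b := by
  refine .of_mono hright fun f₁' g₁' g₂' h' p hp => ?_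
  have hpb : IsPullback (pullback.snd f₁' f₁) (pullback.fst f₁' f₁ ≫ g₁') (f₁ ≫ f₂) g₂' :=
    (IsPullback.of_hasPullback f₁' f₁).flip.paste_vert h'
  obtain ⟨u, ⟨hu, -⟩, -⟩ := hout.final _ _ _ hpb (hleft.lift (pullback.snd f₁' f₁)
    (pullback.fst f₁' f₁ ≫ p) (by rw [Category.assoc, hp, pullback.condition]))
    (hleft.lift_fst _ _ _)
  exact ⟨u, hu⟩

lemma IsFPBC.exists_isFPBC_of_comp [HasPullbacksAlong f₁] [HasPullback f₂ b] [Mono f₂] [Mono c]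
    [Mono b] (hleft : IsFPBC a f₁ m c) (hout : IsFPBC a (f₁ ≫ f₂) k b) :
    ∃ n : K' ⟶ K, m ≫ n = k ∧ IsFPBC c f₂ n b := by
  obtain ⟨n, hn, hmn⟩ := hout.exists_lift (hleft.isPullback.comp_mono f₂)
  exact ⟨n, hmn, hout.of_isFPBC_comp hleft.isPullback
    (hleft.isPullback_of_isPullback_comp hout.isPullback hn)⟩

end Decomposition

theorem forward_modularity_general [Adhesive C] {L R S G H T : C}
    (α : Rule L R) (β : Rule G H) (γ : Rule S T)
    (f₁ : L ⟶ S) (f₂ : S ⟶ G) (g : R ⟶ H) (g₁ : R ⟶ T)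
    [Mono f₁] [Mono f₂]
    (h1 : IsDerivation α (f₁ ≫ f₂) g β)
    (h2 : IsDerivation α f₁ g₁ γ) :
    ∃! g₂ : T ⟶ H, Mono g₂ ∧ g₁ ≫ g₂ = g ∧ IsDerivation γ f₂ g₂ β := by
  obtain ⟨k, -, hk, hkPO⟩ := h1
  obtain ⟨m, -, hm, hmPO⟩ := h2
  have := β.mono_left
  have := γ.mono_left
  have : HasPullbacksAlong f₁ := fun x => hasPullback_symmetry f₁ x
  have : HasPullback f₂ β.left := hasPullback_symmetry β.left f₂
  obtain ⟨n, rfl, hn⟩ := hm.exists_isFPBC_of_comp hk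
  have : Mono n := mono_of_mono_fac hn.isPullback.w.symm
  have hnPO : IsPushout γ.right n (hmPO.desc g (n ≫ β.right) (by simpa using hkPO.w))
      β.right :=
    .of_top (by rwa [hmPO.inl_desc]) (hmPO.inr_desc _ _ _) hmPO
  refine ⟨_, ⟨Adhesive.mono_of_isPushout_of_mono_right hnPO, hmPO.inl_desc _ _ _,
    n, inferInstance, hn, hnPO⟩, ?_⟩
  rintro g₂ ⟨-, hg, n', -, hn', hn'PO⟩
  have : n' = n := (cancel_mono β.left).1 (hn'.isPullback.w.symm.trans hn.isPullback.w)
  subst this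
  exact hmPO.hom_ext (by rw [hg, hmPO.inl_desc]) (by rw [hn'PO.w, hmPO.inr_desc])

/-- Forward modularity of derivations. -/
theorem forward_modularity [Adhesive C] {L R S G H T : C}
    (α : Rule L R) (β : Rule G H) (γ : Rule S T)
    (f₁ : L ⟶ S) (f₂ : S ⟶ G) (g : R ⟶ H) (g₁ : R ⟶ T)
    [Mono f₁] [Mono f₂] [Mono g] [Mono g₁]
    (h1 : IsDerivation α (f₁ ≫ f₂) g β)
    (h2 : IsDerivation α f₁ g₁ γ) :
    ∃! g₂ : T ⟶ H, Mono g₂ ∧ g₁ ≫ g₂ = g ∧ IsDerivation γ f₂ g₂ β :=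
  forward_modularity_general α β γ f₁ f₂ g g₁ h1 h2
end

section
/- Backward modularity of derivations: Let C be an adhesive category, let α : L ⇀ R, β : G ⇀ H, γ : S ⇀ T be rules and let f : L ⟶ G, f₁ : L ⟶ S, g₁ : R ⟶ T, g₂ : T ⟶ H be matches such that f ⇒[α] (g₂ ∘ g₁) with corule β and g₁ ⇒[α†] f₁ with corule γ†. Then there exists a unique match f₂ : S ⟶ G such that f₂ ∘ f₁ = f, f₁ ⇒[α] g₁ with corule γ, and f₂ ⇒[γ] g₂ with corule β. -/
open CategoryTheory Limits

universe v u

variable {C : Type u} [Category.{v} C]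

/-!
Pulling the outer pushout `α₂ ≫ g₁ ≫ g₂ = h ≫ β₂` back along the mono `g₂` produces a pushout
complement of `(α₂, g₁)`. Pushouts along monos are final pullback complements and FPBCs are
unique up to isomorphism, so the given FPBC `(k, γ₂)` of `(α₂, g₁)` is that pushout complement;
this splits the outer pushout into two pushouts glued along a mono `m : γ.K ⟶ β.K`.
The match `f₂` is then induced on the pushout `S = L ⊔_{α.K} γ.K` by `f` and `m ≫ β₁`. It is mono
because, in an adhesive category, the pushout of two subobjects over their intersection is their
union, and `(m, β₁)` is an FPBC because FPBCs decompose. Uniqueness holds because `β₂` is mono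
and `S` is a pushout.
-/

theorem CategoryTheory.IsPullback.of_exists_lift {P X Y Z : C} {fst : P ⟶ X} {snd : P ⟶ Y}
    {f : X ⟶ Z} {g : Y ⟶ Z} [Mono fst] (w : fst ≫ f = snd ≫ g)
    (h : ∀ {W : C} (a : W ⟶ X) (b : W ⟶ Y), a ≫ f = b ≫ g →
      ∃ l : W ⟶ P, l ≫ fst = a ∧ l ≫ snd = b) :
    IsPullback fst snd f g :=
  IsPullback.of_isLimit <| PullbackCone.IsLimit.mk w
    (fun s => (h s.fst s.snd s.condition).choose)
    (fun s => (h s.fst s.snd s.condition).choose_spec.1)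
    (fun s => (h s.fst s.snd s.condition).choose_spec.2)
    (fun s l hl _ => by rw [← cancel_mono fst, hl, (h s.fst s.snd s.condition).choose_spec.1])

theorem IsFPBC.exists_iso {X Y Z W W' : C} {f₁ : X ⟶ Y} {f₂ : Y ⟶ Z} {g₁ : X ⟶ W}
    {g₂ : W ⟶ Z} {g₁' : X ⟶ W'} {g₂' : W' ⟶ Z} (h : IsFPBC f₁ f₂ g₁ g₂)
    (h' : IsFPBC f₁ f₂ g₁' g₂') : ∃ e : W ≅ W', g₁ ≫ e.hom = g₁' ∧ e.hom ≫ g₂' = g₂ := by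
  obtain ⟨φ, ⟨hφ₂, hφ₁⟩, -⟩ := h'.final f₁ g₁ g₂ h.isPullback (𝟙 X) (Category.id_comp _)
  obtain ⟨ψ, ⟨hψ₂, hψ₁⟩, -⟩ := h.final f₁ g₁' g₂' h'.isPullback (𝟙 X) (Category.id_comp _)
  rw [Category.id_comp] at hφ₁ hψ₁
  have eq_id {V : C} {v₁ : X ⟶ V} {v₂ : V ⟶ Z} (hv : IsFPBC f₁ f₂ v₁ v₂) {u : V ⟶ V}
      (hu₂ : u ≫ v₂ = v₂) (hu₁ : v₁ ≫ u = v₁) : u = 𝟙 V :=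
    (hv.final f₁ v₁ v₂ hv.isPullback (𝟙 X) (Category.id_comp _)).unique
      ⟨hu₂, by rw [hu₁, Category.id_comp]⟩ ⟨Category.id_comp _, by simp⟩
  refine ⟨⟨φ, ψ, eq_id h ?_ ?_, eq_id h' ?_ ?_⟩, hφ₁, hφ₂⟩
  · rw [Category.assoc, hψ₂, hφ₂]
  · rw [reassoc_of% hφ₁, hψ₁]
  · rw [Category.assoc, hφ₂, hψ₂]
  · rw [reassoc_of% hψ₁, hφ₁]

theorem IsFPBC.of_top {K L S G E D : C} {a : K ⟶ L} {c : L ⟶ S} {w : S ⟶ G}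
    {k : K ⟶ E} {e : E ⟶ S} {m : E ⟶ D} {d : D ⟶ G} [HasPullbacksAlong c] [Mono e] [Mono d]
    (s : IsFPBC a (c ≫ w) (k ≫ m) d) (p : e ≫ w = m ≫ d) (t : IsFPBC a c k e) :
    IsFPBC e w m d := by
  refine ⟨IsPullback.of_exists_lift p fun {W} x z hxz => ?_, fun {P Q} x y z hPQ p' hp' => ?_⟩
  · have hL := (IsPullback.of_hasPullback x c).flip
    obtain ⟨l, hl, -⟩ := t.final _ _ x hL
      (s.isPullback.lift (pullback.snd x c) (pullback.fst x c ≫ z)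
        (by rw [Category.assoc, ← pullback.condition_assoc, hxz]))
      (s.isPullback.lift_fst _ _ _)
    exact ⟨l, hl.1, by rw [← cancel_mono d, Category.assoc, ← p, reassoc_of% hl.1, hxz]⟩
  · have hL := (IsPullback.of_hasPullback x c).flip.paste_vert hPQ
    obtain ⟨u, hu, -⟩ := s.final _ _ z hL
      (t.isPullback.lift (pullback.snd x c) (pullback.fst x c ≫ p')
        (by rw [← pullback.condition, Category.assoc, hp']))
      (t.isPullback.lift_fst _ _ _)
    refine ⟨u, ⟨hu.1, ?_⟩, fun u' hu' => by rw [← cancel_mono d, hu.1, hu'.1]⟩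
    rw [← cancel_mono d, Category.assoc, hu.1, Category.assoc, ← p, ← hPQ.w, reassoc_of% hp']

theorem isDerivation_rev_iff {L R G H : C} (α : Rule L R) (f : R ⟶ G) (g : L ⟶ H)
    (β : Rule H G) : IsDerivation α.rev f g β.rev ↔
      ∃ h : α.K ⟶ β.K, Mono h ∧ IsFPBC α.right f h β.right ∧ IsPushout α.left h g β.left :=
  Iff.rfl

section

variable [Adhesive C]

theorem IsFPBC.of_isPushout {K L E S : C} {a : K ⟶ L} {b : K ⟶ E} {c : L ⟶ S} {d : E ⟶ S}
    [Mono a] (H : IsPushout a b c d) : IsFPBC a c b d := by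
  have : Mono d := Adhesive.mono_of_isPushout_of_mono_left H
  refine ⟨Adhesive.isPullback_of_isPushout_of_mono_left H, fun {P Q} x y z hP p hp => ?_⟩
  have hE := IsPullback.of_hasPullback d z
  obtain ⟨w, hwf, hws⟩ : ∃ w : P ⟶ pullback d z,
      w ≫ pullback.fst d z = p ≫ b ∧ w ≫ pullback.snd d z = y :=
    ⟨pullback.lift (p ≫ b) y (by rw [Category.assoc, ← H.w, reassoc_of% hp, hP.w]),
      pullback.lift_fst _ _ _, pullback.lift_snd _ _ _⟩
  have hK : IsPullback (𝟙 P) p x a := IsPullback.of_horiz_isIso_mono ⟨by simp [hp]⟩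
  have hW : IsPullback w p (pullback.fst d z) b := by
    refine IsPullback.of_right ?_ hwf hE.flip
    simpa [hws, H.w] using hK.paste_horiz hP.flip
  -- Pulling `H` back along `z` gives a pushout of the identity of `P`, so `Q ≅ pullback d z`.
  have hQ : IsPushout (𝟙 P) w y (pullback.snd d z) :=
    (Adhesive.van_kampen H _ _ _ _ _ _ _ _ hK hW ⟨hP.w.symm⟩ ⟨pullback.condition.symm⟩
      ⟨by simp [hws]⟩).mpr ⟨hP.flip, hE.flip⟩
  have : IsIso (pullback.snd d z) := hQ.isIso_inr_of_isIso
  refine ⟨inv (pullback.snd d z) ≫ pullback.fst d z, ⟨by simp [pullback.condition], ?_⟩,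
    fun u hu => by rw [← cancel_mono d, hu.1]; simp [pullback.condition]⟩
  rw [← hws, Category.assoc, IsIso.hom_inv_id_assoc, hwf]

theorem IsFPBC.isPushout_of_isPushout {K L S E E' : C} {a : K ⟶ L} {c : L ⟶ S} {b : K ⟶ E}
    {d : E ⟶ S} {b' : K ⟶ E'} {d' : E' ⟶ S} [Mono a] (hF : IsFPBC a c b d)
    (H : IsPushout a b' c d') : IsPushout a b c d := by
  obtain ⟨e, hb, hd⟩ := (IsFPBC.of_isPushout H).exists_iso hF
  exact H.of_iso (Iso.refl _) (Iso.refl _) e (Iso.refl _) (by simp) (by simp [hb]) (by simp)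
    (by simp [hd])

theorem CategoryTheory.Adhesive.exists_isPushout_pullback_of_isPushout_comp {K R T H D : C}
    {a : K ⟶ R} {h : K ⟶ D} {x : R ⟶ T} {y : T ⟶ H} {d : D ⟶ H} [Mono a] [Mono y]
    (PO : IsPushout a h (x ≫ y) d) :
    ∃ k : K ⟶ pullback y d, k ≫ pullback.snd y d = h ∧ IsPushout a k x (pullback.fst y d) := by
  have hD := IsPullback.of_hasPullback y d
  have : Mono (pullback.snd y d) := hD.mono_snd_of_mono
  obtain ⟨k, hkx, hkh⟩ : ∃ k : K ⟶ pullback y d,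
      k ≫ pullback.fst y d = a ≫ x ∧ k ≫ pullback.snd y d = h :=
    ⟨pullback.lift (a ≫ x) h (by rw [Category.assoc, PO.w]), pullback.lift_fst _ _ _,
      pullback.lift_snd _ _ _⟩
  refine ⟨k, hkh, (Adhesive.van_kampen PO _ _ _ _ (𝟙 K) (𝟙 R) _ y (IsPullback.id_vert a)
    (IsPullback.of_vert_isIso_mono ⟨by rw [hkh, Category.id_comp]⟩) ⟨by simp⟩
    ⟨pullback.condition⟩ ⟨hkx.symm⟩).mpr ⟨IsPullback.of_vert_isIso_mono ⟨by simp⟩, hD⟩⟩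

theorem CategoryTheory.IsPushout.exists_decomposition_of_isFPBC {K R T H D E : C} {a : K ⟶ R}
    {h : K ⟶ D} {x : R ⟶ T} {y : T ⟶ H} {d : D ⟶ H} {k : K ⟶ E} {e : E ⟶ T} [Mono a] [Mono y]
    (PO : IsPushout a h (x ≫ y) d) (hF : IsFPBC a x k e) :
    ∃ m : E ⟶ D, k ≫ m = h ∧ IsPushout a k x e ∧ IsPushout e m y d := by
  obtain ⟨k', hk', PO'⟩ := Adhesive.exists_isPushout_pullback_of_isPushout_comp PO
  obtain ⟨φ, ⟨hφe, hφk⟩, -⟩ :=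
    (IsFPBC.of_isPushout PO').final a k e hF.isPullback (𝟙 K) (Category.id_comp _)
  rw [Category.id_comp] at hφk
  have hTk := hF.isPushout_of_isPushout PO'
  have hkm : k ≫ φ ≫ pullback.snd y d = h := by rw [reassoc_of% hφk, hk']
  refine ⟨φ ≫ pullback.snd y d, hkm, hTk, IsPushout.of_top (by rwa [hkm]) ?_ hTk⟩
  rw [← hφe, Category.assoc, Category.assoc, pullback.condition]

theorem CategoryTheory.Adhesive.mono_of_isPushout_of_isPullback {K L E S G : C} {a : K ⟶ L}
    {b : K ⟶ E} {c : L ⟶ S} {d : E ⟶ S} {u : L ⟶ G} {v : E ⟶ G} {w : S ⟶ G} [Mono u] [Mono v]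
    (HPO : IsPushout a b c d) (HPB : IsPullback a b u v) (hu : c ≫ w = u) (hv : d ≫ w = v) :
    Mono w := by
  have : Mono (pullback.fst u v) := (IsPullback.of_hasPullback u v).mono_fst_of_mono
  have HPO' : IsPushout (pullback.fst u v) (pullback.snd u v) c d :=
    HPO.of_iso HPB.isoPullback (Iso.refl _) (Iso.refl _) (Iso.refl _) (by simp) (by simp)
      (by simp) (by simp)
  have : w = HPO'.isoPushout.hom ≫ pushout.desc u v pullback.condition :=
    HPO'.hom_ext (by simp [hu]; exact (pushout.inl_desc _ _ _).symm)
      (by simp [hv]; exact (pushout.inr_desc _ _ _).symm)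
  rw [this]
  infer_instance

end

theorem backward_modularity_general [Adhesive C] {L R S T G H : C}
    (α : Rule L R) (β : Rule G H) (γ : Rule S T)
    (f : L ⟶ G) (f₁ : L ⟶ S) (g₁ : R ⟶ T) (g₂ : T ⟶ H)
    [Mono f] [Mono f₁] [Mono g₂]
    (h1 : IsDerivation α f (g₁ ≫ g₂) β)
    (h2 : IsDerivation α.rev g₁ f₁ γ.rev) :
    ∃! f₂ : S ⟶ G, Mono f₂ ∧ f₁ ≫ f₂ = f ∧
      IsDerivation α f₁ g₁ γ ∧ IsDerivation γ f₂ g₂ β := by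
  have := α.mono_left; have := α.mono_right; have := β.mono_left; have := β.mono_right
  have := γ.mono_left; have := γ.mono_right
  obtain ⟨h, -, hLh, hRh⟩ := h1
  obtain ⟨k, hk, hRk, hLk⟩ := (isDerivation_rev_iff α g₁ f₁ γ).1 h2
  obtain ⟨m, rfl, hRk', hRm⟩ := hRh.exists_decomposition_of_isFPBC hRk
  have : Mono m := (Adhesive.isPullback_of_isPushout_of_mono_left hRm).mono_snd_of_mono
  obtain ⟨f₂, hf₁, hγ⟩ : ∃ f₂ : S ⟶ G, f₁ ≫ f₂ = f ∧ γ.left ≫ f₂ = m ≫ β.left :=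
    ⟨hLk.desc f (m ≫ β.left) (by rw [hLh.isPullback.w, Category.assoc]),
      hLk.inl_desc _ _ _, hLk.inr_desc _ _ _⟩
  have : HasPullbacksAlong f₁ := fun s => hasPullback_symmetry f₁ s
  have hLm : IsFPBC γ.left f₂ m β.left :=
    IsFPBC.of_top (hf₁ ▸ hLh) hγ (IsFPBC.of_isPushout hLk)
  have hkm : IsPullback k (𝟙 _) m (k ≫ m) := IsPullback.of_vert_isIso_mono ⟨by simp⟩
  have hLkm : IsPullback α.left k f (m ≫ β.left) := by
    simpa using (hkm.paste_vert hLh.isPullback.flip).flip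
  have : Mono f₂ := Adhesive.mono_of_isPushout_of_isPullback hLk hLkm hf₁ hγ
  refine ⟨f₂, ⟨this, hf₁, ⟨k, hk, IsFPBC.of_isPushout hLk, hRk'⟩, ⟨m, ‹_›, hLm, hRm⟩⟩, ?_⟩
  rintro f₂' ⟨-, hf₁', -, m', -, hLm', hRm'⟩
  have hm' : m' = m := by rw [← cancel_mono β.right, ← hRm'.w, hRm.w]
  exact hLk.hom_ext (by rw [hf₁', hf₁]) (by rw [hLm'.isPullback.w, hm', hγ])

/-- Backward modularity of derivations. -/
theorem backward_modularity [Adhesive C] {L R S T G H : C}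
    (α : Rule L R) (β : Rule G H) (γ : Rule S T)
    (f : L ⟶ G) (f₁ : L ⟶ S) (g₁ : R ⟶ T) (g₂ : T ⟶ H)
    [Mono f] [Mono f₁] [Mono g₁] [Mono g₂]
    (h1 : IsDerivation α f (g₁ ≫ g₂) β)
    (h2 : IsDerivation α.rev g₁ f₁ γ.rev) :
    ∃! f₂ : S ⟶ G, Mono f₂ ∧ f₁ ≫ f₂ = f ∧
      IsDerivation α f₁ g₁ γ ∧ IsDerivation γ f₂ g₂ β :=
  backward_modularity_general α β γ f f₁ g₁ g₂ h1 h2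
end

section
/- Finiteness of minimal gluings: Let C be an adhesive category with binary products in which every object has only finitely many subobjects (C is finitely powered). Then for any two objects G₁, G₂ of C, the set of isomorphism classes of minimal gluings of G₁ and G₂ is finite. -/
open CategoryTheory Limits

universe v u

variable {C : Type u} [Category.{v} C]

/-! A minimal gluing is the pushout of its legs over their pullback, so up to isomorphism it
is determined by that pullback, viewed as a subobject of `G₁ ⨯ G₂`; there are finitely many
of those. -/

namespace Gluing

variable [Adhesive C] {G₁ G₂ : C}

attribute [local instance] Gluing.mono₁ Gluing.mono₂

/-- By effective unions (`Adhesive.desc_mono_of_mono`) the pushout maps monomorphically into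
the tip, so minimality makes it the whole tip. -/
lemma isPushout_of_minimal {gl : Gluing G₁ G₂} (hmin : gl.Minimal) :
    IsPushout (pullback.fst gl.i₁ gl.i₂) (pullback.snd gl.i₁ gl.i₂) gl.i₁ gl.i₂ := by
  have : IsIso (pushout.desc gl.i₁ gl.i₂ pullback.condition) :=
    hmin _ _ inferInstance ⟨pushout.inl _ _, pushout.inl_desc _ _ _⟩
      ⟨pushout.inr _ _, pushout.inr_desc _ _ _⟩
  exact (IsPushout.of_hasPushout _ _).of_iso (Iso.refl _) (Iso.refl _) (Iso.refl _)
    (asIso (pushout.desc gl.i₁ gl.i₂ pullback.condition)) (by simp) (by simp)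
    (by simp [pushout.inl_desc]) (by simp [pushout.inr_desc])

variable [HasBinaryProducts C]

noncomputable def overlap (gl : Gluing G₁ G₂) : Subobject (G₁ ⨯ G₂) :=
  Subobject.mk (prod.lift (pullback.fst gl.i₁ gl.i₂) (pullback.snd gl.i₁ gl.i₂))

lemma overlap_le_overlap_iff {gl gl' : Gluing G₁ G₂} : gl.overlap ≤ gl'.overlap ↔
    pullback.fst gl.i₁ gl.i₂ ≫ gl'.i₁ = pullback.snd gl.i₁ gl.i₂ ≫ gl'.i₂ := by
  constructor
  · intro h
    obtain ⟨σ, hσ⟩ : ∃ σ, σ ≫ prod.lift (pullback.fst gl'.i₁ gl'.i₂) (pullback.snd gl'.i₁ gl'.i₂)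
        = prod.lift (pullback.fst gl.i₁ gl.i₂) (pullback.snd gl.i₁ gl.i₂) :=
      ⟨_, Subobject.ofMkLEMk_comp h⟩
    have h₁ := congrArg (· ≫ prod.fst) hσ
    have h₂ := congrArg (· ≫ prod.snd) hσ
    simp only [Category.assoc, prod.lift_fst, prod.lift_snd] at h₁ h₂
    rw [← h₁, ← h₂, Category.assoc, Category.assoc, pullback.condition]
  · intro w
    exact Subobject.mk_le_mk_of_comm (pullback.lift _ _ w)
      (by rw [prod.comp_lift, pullback.lift_fst, pullback.lift_snd])

lemma overlap_le_of_comp_eq {gl gl' : Gluing G₁ G₂} (κ : gl.U ⟶ gl'.U)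
    (h₁ : gl.i₁ ≫ κ = gl'.i₁) (h₂ : gl.i₂ ≫ κ = gl'.i₂) : gl.overlap ≤ gl'.overlap :=
  overlap_le_overlap_iff.mpr (by rw [← h₁, ← h₂, pullback.condition_assoc])

lemma exists_comp_eq_of_overlap_le {gl gl' : Gluing G₁ G₂} (hmin : gl.Minimal)
    (h : gl.overlap ≤ gl'.overlap) :
    ∃ κ : gl.U ⟶ gl'.U, gl.i₁ ≫ κ = gl'.i₁ ∧ gl.i₂ ≫ κ = gl'.i₂ :=
  have hU := isPushout_of_minimal hmin
  ⟨hU.desc _ _ (overlap_le_overlap_iff.mp h), hU.inl_desc _ _ _, hU.inr_desc _ _ _⟩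

lemma gluingIso_iff_overlap_eq {gl gl' : Gluing G₁ G₂} (hmin : gl.Minimal)
    (hmin' : gl'.Minimal) : GluingIso gl gl' ↔ gl.overlap = gl'.overlap := by
  constructor
  · rintro ⟨u, h₁, h₂⟩
    exact le_antisymm (overlap_le_of_comp_eq u.hom h₁ h₂)
      (overlap_le_of_comp_eq u.inv (by simp [← h₁]) (by simp [← h₂]))
  · intro h
    obtain ⟨κ, hκ₁, hκ₂⟩ := exists_comp_eq_of_overlap_le hmin h.le
    obtain ⟨κ', hκ'₁, hκ'₂⟩ := exists_comp_eq_of_overlap_le hmin' h.ge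
    refine ⟨⟨κ, κ', ?_, ?_⟩, hκ₁, hκ₂⟩
    · exact (isPushout_of_minimal hmin).hom_ext (by simp [reassoc_of% hκ₁, hκ'₁])
        (by simp [reassoc_of% hκ₂, hκ'₂])
    · exact (isPushout_of_minimal hmin').hom_ext (by simp [reassoc_of% hκ'₁, hκ₁])
        (by simp [reassoc_of% hκ'₂, hκ₂])

end Gluing

/-- Finiteness of the set of isomorphism classes of minimal gluings, in an adhesive
category with binary products in which every object has finitely many subobjects. -/
theorem finiteness_of_minimal_gluings [Adhesive C] [HasBinaryProducts C]
    (hfin : ∀ X : C, Finite (Subobject X)) (G₁ G₂ : C) :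
    Finite (Quot (fun g h : {gl : Gluing G₁ G₂ // gl.Minimal} => GluingIso g.1 h.1)) := by
  have := hfin (G₁ ⨯ G₂)
  refine Finite.of_injective (Quot.lift (fun gl => gl.1.overlap)
    fun a b hab => (Gluing.gluingIso_iff_overlap_eq a.2 b.2).mp hab) ?_
  rintro ⟨a⟩ ⟨b⟩ h
  exact Quot.sound ((Gluing.gluingIso_iff_overlap_eq a.2 b.2).mpr h)
end

section
/- Factorization through a minimal gluing: Let C be an adhesive category and let G₁, G₂, H be objects of C. For every cospan of matches f₁ : G₁ ⟶ H, f₂ : G₂ ⟶ H there exist a minimal gluing (i₁ : G₁ ⟶ U, i₂ : G₂ ⟶ U) and a match u : U ⟶ H with f₁ = u ∘ i₁ and f₂ = u ∘ i₂. Moreover, this factorization is unique up to unique isomorphism: if (i₁′ : G₁ ⟶ U′, i₂′ : G₂ ⟶ U′) is a minimal gluing and u′ : U′ ⟶ H a match with f₁ = u′ ∘ i₁′ and f₂ = u′ ∘ i₂′, then there is a unique isomorphism w : U ≅ U′ with i₁′ = w ∘ i₁, i₂′ = w ∘ i₂, and u = u′ ∘ w. -/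
open CategoryTheory Limits

universe v u

variable {C : Type u} [Category.{v} C]

/-!
The minimal gluing of two matches `f₁ : G₁ ⟶ H`, `f₂ : G₂ ⟶ H` is their union: the pushout of
`G₁ ← G₁ ×_H G₂ → G₂`. Its comparison map to `H` is a monomorphism (Lack–Sobociński), and it is
minimal because the legs of a pushout cannot factor through a proper subobject of its tip.
For uniqueness, pulling back `u'` along `u` gives a subobject of the tip of a minimal gluing
through which both legs factor, so `u` factors through `u'`; by symmetry, and since both are
monomorphisms, `u` and `u'` represent the same subobject of `H`.
-/

theorem CategoryTheory.IsPushout.isIso_of_mono_of_factors {P X Y Z V : C}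
    {p₁ : P ⟶ X} {p₂ : P ⟶ Y} {i₁ : X ⟶ Z} {i₂ : Y ⟶ Z} (hpo : IsPushout p₁ p₂ i₁ i₂)
    (m : V ⟶ Z) [Mono m]
    {j₁ : X ⟶ V} {j₂ : Y ⟶ V} (h₁ : j₁ ≫ m = i₁) (h₂ : j₂ ≫ m = i₂) : IsIso m := by
  have hw : p₁ ≫ j₁ = p₂ ≫ j₂ := by
    rw [← cancel_mono m, Category.assoc, Category.assoc, h₁, h₂, hpo.w]
  have hsection : hpo.desc j₁ j₂ hw ≫ m = 𝟙 Z := hpo.hom_ext (by simp [h₁]) (by simp [h₂])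
  have : IsSplitEpi m := IsSplitEpi.mk' ⟨_, hsection⟩
  exact isIso_of_mono_of_isSplitEpi m

theorem existsUnique_iso_hom_comp_eq {A B H : C} {u : A ⟶ H} {u' : B ⟶ H} [Mono u] [Mono u']
    {w : A ⟶ B} {w' : B ⟶ A} (hw : w ≫ u' = u) (hw' : w' ≫ u = u') :
    ∃! e : A ≅ B, e.hom ≫ u' = u :=
  ⟨⟨w, w', by simp [← cancel_mono u, hw, hw'], by simp [← cancel_mono u', hw, hw']⟩, hw,
    fun e he => Iso.ext (by rw [← cancel_mono u', he, hw])⟩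

namespace Gluing

variable {G₁ G₂ : C}

noncomputable def ofSpan [Adhesive C] {P : C} (p₁ : P ⟶ G₁) (p₂ : P ⟶ G₂) [Mono p₁] [Mono p₂] :
    Gluing G₁ G₂ where
  U := pushout p₁ p₂
  i₁ := pushout.inl p₁ p₂
  i₂ := pushout.inr p₁ p₂
  mono₁ := Adhesive.mono_of_isPushout_of_mono_right (IsPushout.of_hasPushout p₁ p₂)
  mono₂ := Adhesive.mono_of_isPushout_of_mono_left (IsPushout.of_hasPushout p₁ p₂)

theorem ofSpan_minimal [Adhesive C] {P : C} (p₁ : P ⟶ G₁) (p₂ : P ⟶ G₂) [Mono p₁] [Mono p₂] :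
    (ofSpan p₁ p₂).Minimal := by
  rintro V m hm ⟨j₁, h₁⟩ ⟨j₂, h₂⟩
  have : @Mono _ _ V (pushout p₁ p₂) m := hm
  exact (IsPushout.of_hasPushout p₁ p₂).isIso_of_mono_of_factors m h₁ h₂

theorem Minimal.exists_comp_eq {gl : Gluing G₁ G₂} (hgl : gl.Minimal) {H V : C}
    (u : gl.U ⟶ H) (u' : V ⟶ H) [Mono u'] [HasPullback u' u] {a₁ : G₁ ⟶ V} {a₂ : G₂ ⟶ V}
    (h₁ : a₁ ≫ u' = gl.i₁ ≫ u) (h₂ : a₂ ≫ u' = gl.i₂ ≫ u) :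
    ∃ w : gl.U ⟶ V, w ≫ u' = u := by
  have : IsIso (pullback.snd u' u) :=
    hgl _ _ inferInstance ⟨pullback.lift a₁ gl.i₁ h₁, pullback.lift_snd _ _ _⟩
      ⟨pullback.lift a₂ gl.i₂ h₂, pullback.lift_snd _ _ _⟩
  exact ⟨inv (pullback.snd u' u) ≫ pullback.fst u' u, by simp [pullback.condition]⟩

end Gluing

/-- Factorization of a cospan of matches through a minimal gluing, uniquely up to
unique isomorphism. -/
theorem factorization_through_minimal_gluing [Adhesive C] {G₁ G₂ H : C}
    (f₁ : G₁ ⟶ H) (f₂ : G₂ ⟶ H) [Mono f₁] [Mono f₂] :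
    ∃ (gl : Gluing G₁ G₂) (u : gl.U ⟶ H), gl.Minimal ∧ Mono u ∧
      gl.i₁ ≫ u = f₁ ∧ gl.i₂ ≫ u = f₂ ∧
      ∀ (gl' : Gluing G₁ G₂) (u' : gl'.U ⟶ H), gl'.Minimal → Mono u' →
        gl'.i₁ ≫ u' = f₁ → gl'.i₂ ≫ u' = f₂ →
        ∃! w : gl.U ≅ gl'.U,
          gl.i₁ ≫ w.hom = gl'.i₁ ∧ gl.i₂ ≫ w.hom = gl'.i₂ ∧ w.hom ≫ u' = u := by
  let gl := Gluing.ofSpan (pullback.fst f₁ f₂) (pullback.snd f₁ f₂)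
  have hmin : gl.Minimal := Gluing.ofSpan_minimal _ _
  let u : gl.U ⟶ H := pushout.desc f₁ f₂ pullback.condition
  have h₁ : gl.i₁ ≫ u = f₁ := pushout.inl_desc _ _ _
  have h₂ : gl.i₂ ≫ u = f₂ := pushout.inr_desc _ _ _
  have hu : Mono u := Adhesive.desc_mono_of_mono
  refine ⟨gl, u, hmin, hu, h₁, h₂, fun gl' u' hmin' _ e₁ e₂ => ?_⟩
  obtain ⟨w, hw⟩ := hmin.exists_comp_eq u u' (e₁.trans h₁.symm) (e₂.trans h₂.symm)
  obtain ⟨w', hw'⟩ := hmin'.exists_comp_eq u' u (h₁.trans e₁.symm) (h₂.trans e₂.symm)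
  obtain ⟨e, he, huniq⟩ := existsUnique_iso_hom_comp_eq hw hw'
  refine ⟨e, ⟨?_, ?_, he⟩, fun e' he' => huniq e' he'.2.2⟩
  · rw [← cancel_mono u', Category.assoc, he, h₁, e₁]
  · rw [← cancel_mono u', Category.assoc, he, h₂, e₂]
end

section
/- Restriction lemma: Let C be an adhesive category, α : L ⇀ R a rule, and f : L ⟶ G, g : R ⟶ H, g₁ : R ⟶ T matches such that f ⇒[α] g (with some corule) and g₁ is not derivable by α. Then there is no match g₂ : T ⟶ H with g₂ ∘ g₁ = g. -/
/-!
Pull the pushout square `g ∘ α₂ = β₂ ∘ h` of the derivation back along the match `g₂`. By the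
van Kampen property the pulled-back square is again a pushout, now with `g₁` as its comatch leg.
Pushing `α₁` out along the new context map `K ⟶ D'` completes it to a derivation of `g₁`, because
in an adhesive category a pushout along a monomorphism is a final pullback complement.
-/

open CategoryTheory Limits

universe v u

variable {C : Type u} [Category.{v} C]

namespace CategoryTheory.IsPushout

variable [Adhesive C]

/-- By van Kampen, the pullback of `g₂` along `g₂'` is the pushout of `𝟙 P`, so `g₂'` factors
through `g₂`. -/
theorem exists_lift_of_isPullback {X Y Z W : C} {f₁ : X ⟶ Y} {f₂ : Y ⟶ Z}
    {g₁ : X ⟶ W} {g₂ : W ⟶ Z} [Mono f₁] (hpo : IsPushout f₁ g₁ f₂ g₂)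
    {P Q : C} {f₁' : P ⟶ Y} {g₁' : P ⟶ Q} {g₂' : Q ⟶ Z} (hpb : IsPullback f₁' g₁' f₂ g₂')
    (p : P ⟶ X) (hp : p ≫ f₁ = f₁') :
    ∃ u : Q ⟶ W, u ≫ g₂ = g₂' ∧ g₁' ≫ u = p ≫ g₁ := by
  have : Mono g₂ := Adhesive.mono_of_isPushout_of_mono_left hpo
  have hW : IsPullback (pullback.fst g₂ g₂') (pullback.snd g₂ g₂') g₂ g₂' :=
    IsPullback.of_hasPullback _ _
  have hw : (p ≫ g₁) ≫ g₂ = g₁' ≫ g₂' := by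
    rw [Category.assoc, ← hpo.w, ← Category.assoc, hp, hpb.w]
  obtain ⟨g', hg'W, hg'Q⟩ := hW.exists_lift _ _ hw
  have hP : IsPullback (𝟙 P) p f₁' f₁ := IsPullback.of_horiz_isIso_mono ⟨by simp [hp]⟩
  have hg' : IsPullback g' p (pullback.fst g₂ g₂') g₁ := by
    refine IsPullback.of_right ?_ hg'W hW.flip
    rw [hg'Q, ← hpo.w]
    simpa using hP.paste_horiz hpb.flip
  have htop : IsPushout (𝟙 P) g' g₁' (pullback.snd g₂ g₂') :=
    (Adhesive.van_kampen hpo (𝟙 P) g' g₁' _ p f₁' _ g₂' hP hg' ⟨hpb.flip.w⟩ ⟨hW.flip.w⟩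
      ⟨by simp [hg'Q]⟩).mpr ⟨hpb.flip, hW.flip⟩
  refine ⟨htop.desc (p ≫ g₁) (pullback.fst g₂ g₂') (by simp [hg'W]), ?_, htop.inl_desc _ _ _⟩
  apply htop.hom_ext
  · rw [htop.inl_desc_assoc, ← hw, Category.assoc]
  · rw [htop.inr_desc_assoc, pullback.condition]

theorem isFPBC {X Y Z W : C} {f₁ : X ⟶ Y} {f₂ : Y ⟶ Z} {g₁ : X ⟶ W} {g₂ : W ⟶ Z}
    [Mono f₁] (hpo : IsPushout f₁ g₁ f₂ g₂) : IsFPBC f₁ f₂ g₁ g₂ where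
  isPullback := Adhesive.isPullback_of_isPushout_of_mono_left hpo
  final _ _ _ hpb p hp := by
    have : Mono g₂ := Adhesive.mono_of_isPushout_of_mono_left hpo
    obtain ⟨u, hu, hu'⟩ := hpo.exists_lift_of_isPullback hpb p hp
    exact ⟨u, ⟨hu, hu'⟩, fun v hv ↦ (cancel_mono g₂).mp (hv.1.trans hu.symm)⟩

theorem of_isPullback_comp_mono {K R D H T D' : C} {a : K ⟶ R} {h : K ⟶ D}
    {g₁ : R ⟶ T} {g₂ : T ⟶ H} {b : D ⟶ H} [Mono a] [Mono g₂]
    (hpo : IsPushout a h (g₁ ≫ g₂) b) {pT : D' ⟶ T} {pD : D' ⟶ D}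
    (hD' : IsPullback pT pD g₂ b) {h' : K ⟶ D'} (hT : h' ≫ pT = a ≫ g₁) (hD : h' ≫ pD = h) :
    IsPushout a h' g₁ pT := by
  have hR : IsPullback g₁ (𝟙 R) g₂ (g₁ ≫ g₂) := IsPullback.of_vert_isIso_mono ⟨by simp⟩
  have hK : IsPullback h' (𝟙 K) pD h := by
    refine IsPullback.of_right ?_ (by simp [hD]) hD'
    rw [hT, ← hD, Category.assoc, ← hD'.w, ← Category.assoc, hT, Category.assoc]
    exact IsPullback.of_vert_isIso_mono ⟨by simp⟩
  exact (Adhesive.van_kampen hpo a h' g₁ pT (𝟙 K) (𝟙 R) pD g₂ IsPullback.of_id_snd hK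
    ⟨by simp⟩ ⟨hD'.w⟩ ⟨hT.symm⟩).mpr ⟨hR, hD'⟩

end CategoryTheory.IsPushout

section

variable [Adhesive C]

theorem derivable_of_isPushout {L R D T : C} (α : Rule L R) (h : α.K ⟶ D) [Mono h]
    (k : D ⟶ T) [Mono k] (g : R ⟶ T) (hpo : IsPushout α.right h g k) : Derivable α g := by
  have := α.mono_left
  have hL : IsPushout α.left h (pushout.inl α.left h) (pushout.inr α.left h) :=
    IsPushout.of_hasPushout _ _
  exact ⟨_, _, ⟨D, _, k, Adhesive.mono_of_isPushout_of_mono_left hL, inferInstance⟩,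
    Adhesive.mono_of_isPushout_of_mono_right hL, h, inferInstance, hL.isFPBC, hpo⟩

theorem IsDerivation.derivable_of_comp {L R G H T : C} {α : Rule L R} {f : L ⟶ G}
    {g₁ : R ⟶ T} {g₂ : T ⟶ H} [Mono g₂] {β : Rule G H} (hd : IsDerivation α f (g₁ ≫ g₂) β) :
    Derivable α g₁ := by
  obtain ⟨h, hh, -, hpo⟩ := hd
  have := α.mono_right
  have := β.mono_right
  have hD' := IsPullback.of_hasPullback g₂ β.right
  let h' := hD'.lift (α.right ≫ g₁) h (by rw [Category.assoc, hpo.w])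
  have : Mono h' := mono_of_mono_fac (hD'.lift_snd _ _ _)
  exact derivable_of_isPushout α h' _ g₁ (hpo.of_isPullback_comp_mono hD' (hD'.lift_fst _ _ _)
    (hD'.lift_snd _ _ _))

end

theorem restriction_lemma_general [Adhesive C] {L R G H T : C}
    (α : Rule L R) (f : L ⟶ G) (g : R ⟶ H) (g₁ : R ⟶ T)
    (β : Rule G H) (hd : IsDerivation α f g β)
    (hnd : ¬ Derivable α g₁) :
    ¬ ∃ g₂ : T ⟶ H, Mono g₂ ∧ g₁ ≫ g₂ = g := by
  rintro ⟨g₂, hg₂, rfl⟩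
  exact hnd hd.derivable_of_comp

/-- Restriction lemma: if `f ⇒[α] g` and `g₁` is not derivable by `α`, then the comatch
`g` does not factor through `g₁` by any match. -/
theorem restriction_lemma [Adhesive C] {L R G H T : C}
    (α : Rule L R) (f : L ⟶ G) (g : R ⟶ H) (g₁ : R ⟶ T)
    [Mono f] [Mono g] [Mono g₁]
    (β : Rule G H) (hd : IsDerivation α f g β)
    (hnd : ¬ Derivable α g₁) :
    ¬ ∃ g₂ : T ⟶ H, Mono g₂ ∧ g₁ ≫ g₂ = g :=
  restriction_lemma_general α f g g₁ β hd hnd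
end

section
/- Correspondence of matches: Let C be an adhesive category, let α : L ⇀ R, β : G ⇀ H, γ : S ⇀ T be rules and f : L ⟶ G, f₁ : L ⟶ S, g : R ⟶ H, g₁ : R ⟶ T matches such that f ⇒[α] g with corule β, g₁ ⇒[α†] f₁ with corule γ†, and g₁ is derivable by α. Then the set M_L = {f₂ : S ⟶ G a match | f₂ ∘ f₁ = f} is in bijection with the set M_R = {g₂ : T ⟶ H a match | g₂ ∘ g₁ = g}. -/
open CategoryTheory Limits

universe v u

variable {C : Type u} [Category.{v} C]

/-!
Both sets are in bijection with the monomorphisms `u : γ.K ⟶ β.K` of contexts satisfying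
`k ≫ u = h`, where `k` and `h` are the context maps of the two derivations. Since `S` is the
pushout of `α.left` and `k`, a match `S ⟶ G` extending `f` is determined by its restriction `u`
to `γ.K`, which exists by finality of the complement `(h, β.left)`; conversely the map glued from
`f` and `u ≫ β.left` is monic because in an adhesive category the pushout of two subobjects over
their intersection is their union. The same argument applies on the right once `(k, γ.right)` is
known to be a pushout complement of `(α.right, g₁)`: it is a final one, `g₁` being derivable
provides a pushout complement, pushout complements along monomorphisms are final, and final
pullback complements are unique up to isomorphism.
-/

namespace CategoryTheory

lemma IsPullback.comp_mono_s6 {P X Y Z Z' : C} {fst : P ⟶ X} {snd : P ⟶ Y} {f : X ⟶ Z}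
    {g : Y ⟶ Z} (hp : IsPullback fst snd f g) (m : Z ⟶ Z') [Mono m] :
    IsPullback fst snd (f ≫ m) (g ≫ m) := by
  simpa using hp.paste_vert (IsPullback.of_vert_isIso_mono ⟨by simp⟩ :
    IsPullback g (𝟙 Y) m (g ≫ m))

lemma IsPullback.of_snd_comp_mono {P X Y' Y Z : C} {fst : P ⟶ X} {snd : P ⟶ Y'} {u : Y' ⟶ Y}
    {f : X ⟶ Z} {g : Y ⟶ Z} [Mono u] (hp : IsPullback fst (snd ≫ u) f g) :
    IsPullback fst snd f (u ≫ g) := by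
  simpa using (IsPullback.of_horiz_isIso_mono ⟨by simp⟩ :
    IsPullback (𝟙 P) snd (snd ≫ u) u).paste_horiz hp

/-- Lack–Sobociński, Theorem 5.1: the pushout of two subobjects over their intersection is their
union. -/
lemma Adhesive.mono_of_isPushout_of_isPullback_s6 [Adhesive C] {W X Y Z U : C} {f : W ⟶ X}
    {g : W ⟶ Y} {h : X ⟶ Z} {i : Y ⟶ Z} {p : X ⟶ U} {q : Y ⟶ U} [Mono p] [Mono q]
    (H : IsPushout f g h i) (hpb : IsPullback f g p q) {t : Z ⟶ U} (ht₁ : h ≫ t = p)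
    (ht₂ : i ≫ t = q) : Mono t := by
  have H' : IsPushout (pullback.fst p q) (pullback.snd p q) h i :=
    H.of_iso hpb.isoPullback (Iso.refl _) (Iso.refl _) (Iso.refl _) (by simp) (by simp)
      (by simp) (by simp)
  have ht : t = H'.isoPushout.hom ≫ pushout.desc p q pullback.condition :=
    H'.hom_ext (by rw [H'.inl_isoPushout_hom_assoc, pushout.inl_desc, ht₁])
      (by rw [H'.inr_isoPushout_hom_assoc, pushout.inr_desc, ht₂])
  rw [ht]
  infer_instance

end CategoryTheory

section FPBC

variable {X Y Z W Q : C} {f₁ : X ⟶ Y} {f₂ : Y ⟶ Z} {g₁ : X ⟶ W} {g₂ : W ⟶ Z}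
  {g₁' : X ⟶ Q} {g₂' : Q ⟶ Z}

noncomputable def IsFPBC.lift (hF : IsFPBC f₁ f₂ g₁ g₂) (hP : IsPullback f₁ g₁' f₂ g₂') :
    Q ⟶ W :=
  (hF.final f₁ g₁' g₂' hP (𝟙 X) (Category.id_comp _)).exists.choose

@[simp]
lemma IsFPBC.lift_comp (hF : IsFPBC f₁ f₂ g₁ g₂) (hP : IsPullback f₁ g₁' f₂ g₂') :
    hF.lift hP ≫ g₂ = g₂' :=
  (hF.final f₁ g₁' g₂' hP (𝟙 X) (Category.id_comp _)).exists.choose_spec.1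

@[simp]
lemma IsFPBC.comp_lift (hF : IsFPBC f₁ f₂ g₁ g₂) (hP : IsPullback f₁ g₁' f₂ g₂') :
    g₁' ≫ hF.lift hP = g₁ :=
  (hF.final f₁ g₁' g₂' hP (𝟙 X) (Category.id_comp _)).exists.choose_spec.2.trans
    (Category.id_comp _)

lemma IsFPBC.lift_unique (hF : IsFPBC f₁ f₂ g₁ g₂) (hP : IsPullback f₁ g₁' f₂ g₂')
    {u : Q ⟶ W} (hu₂ : u ≫ g₂ = g₂') (hu₁ : g₁' ≫ u = g₁) : u = hF.lift hP :=
  (hF.final f₁ g₁' g₂' hP (𝟙 X) (Category.id_comp _)).unique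
    ⟨hu₂, hu₁.trans (Category.id_comp _).symm⟩
    ⟨hF.lift_comp hP, (hF.comp_lift hP).trans (Category.id_comp _).symm⟩

lemma IsFPBC.lift_comp_lift {W' : C} {h₁ : X ⟶ W'} {h₂ : W' ⟶ Z} (hF : IsFPBC f₁ f₂ g₁ g₂)
    (hG : IsFPBC f₁ f₂ h₁ h₂) : hG.lift hF.isPullback ≫ hF.lift hG.isPullback = 𝟙 W :=
  (hF.lift_unique hF.isPullback (by rw [Category.assoc, hF.lift_comp, hG.lift_comp])
      (by rw [← Category.assoc, hG.comp_lift, hF.comp_lift])).trans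
    (hF.lift_unique hF.isPullback (Category.id_comp _) (Category.comp_id _)).symm

@[simps]
noncomputable def IsFPBC.iso {W' : C} {h₁ : X ⟶ W'} {h₂ : W' ⟶ Z} (hF : IsFPBC f₁ f₂ g₁ g₂)
    (hG : IsFPBC f₁ f₂ h₁ h₂) : W' ≅ W where
  hom := hF.lift hG.isPullback
  inv := hG.lift hF.isPullback
  hom_inv_id := hG.lift_comp_lift hF
  inv_hom_id := hF.lift_comp_lift hG

end FPBC

/-- Pulled back along `g₂'`, the pushout becomes a pushout of an identity, so the projection of
`pullback q g₂'` onto `Q` is invertible; the comparison map factors through it. -/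
lemma CategoryTheory.IsPushout.isFPBC_s6 [Adhesive C] {K L D Z : C} {m : K ⟶ L} {n : K ⟶ D}
    {p : L ⟶ Z} {q : D ⟶ Z} [Mono m] (H : IsPushout m n p q) : IsFPBC m p n q := by
  have : Mono q := Adhesive.mono_of_isPushout_of_mono_left H
  refine ⟨Adhesive.isPullback_of_isPushout_of_mono_left H, ?_⟩
  rintro P Q _ g₁' g₂' hpb x rfl
  have hx : IsPullback (𝟙 P) x (x ≫ m) m := IsPullback.of_horiz_isIso_mono ⟨by simp⟩
  have hQ : IsPullback g₁' x g₂' (n ≫ q) := by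
    simpa [← H.w] using (hx.flip.paste_vert hpb).flip
  have t := (IsPullback.of_hasPullback q g₂').flip
  have w : g₁' ≫ g₂' = (x ≫ n) ≫ q := by simpa using hQ.w
  have hD := IsPullback.of_right' hQ t
  have top : IsPushout (𝟙 P) (t.lift g₁' (x ≫ n) w) g₁' (pullback.snd q g₂') :=
    (Adhesive.van_kampen H (𝟙 P) _ g₁' _ x (x ≫ m) _ g₂' hx hD hpb.flip.toCommSq t.toCommSq
      ⟨by simp⟩).mpr ⟨hpb.flip, t⟩
  have := top.isIso_inr_of_isIso
  refine ⟨inv (pullback.snd q g₂') ≫ pullback.fst q g₂', ⟨?_, ?_⟩, fun u hu => ?_⟩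
  · simp [← pullback.condition]
  · have hg₁' : g₁' = t.lift g₁' (x ≫ n) w ≫ pullback.snd q g₂' :=
      (Category.id_comp _).symm.trans top.w
    rw [hg₁', Category.assoc, IsIso.hom_inv_id_assoc, t.lift_snd]
  · rw [← cancel_mono q, hu.1]
    simp [← pullback.condition]

lemma IsFPBC.isPushout [Adhesive C] {K L D D' Z : C} {m : K ⟶ L} {n : K ⟶ D} {p : L ⟶ Z}
    {q : D ⟶ Z} {n' : K ⟶ D'} {q' : D' ⟶ Z} [Mono m] (hF : IsFPBC m p n' q')
    (H : IsPushout m n p q) : IsPushout m n' p q' :=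
  H.of_iso (Iso.refl K) (Iso.refl L) (hF.iso H.isFPBC_s6) (Iso.refl Z) (by simp) (by simp)
    (by simp) (by simp)

section Extensions

variable [Adhesive C] {K L D' S D G : C} {a : K ⟶ L} {k : K ⟶ D'} {s : L ⟶ S} {c : D' ⟶ S}
  {f : L ⟶ G} {h : K ⟶ D} {b : D ⟶ G} [Mono a]

lemma CategoryTheory.IsPushout.isPullback_comp_of_fac (po : IsPushout a k s c) {f₂ : S ⟶ G}
    [Mono f₂] (hf₂ : s ≫ f₂ = f) : IsPullback a k f (c ≫ f₂) :=
  hf₂ ▸ (Adhesive.isPullback_of_isPushout_of_mono_left po).comp_mono_s6 f₂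

noncomputable def CategoryTheory.IsPushout.monoExtensionsEquiv (po : IsPushout a k s c)
    (hF : IsFPBC a f h b) [Mono f] [Mono b] :
    {f₂ : S ⟶ G // Mono f₂ ∧ s ≫ f₂ = f} ≃ {u : D' ⟶ D // Mono u ∧ k ≫ u = h} where
  toFun f₂ :=
    have := f₂.2.1
    have := Adhesive.mono_of_isPushout_of_mono_left po
    ⟨hF.lift (po.isPullback_comp_of_fac f₂.2.2),
      mono_of_mono_fac (hF.lift_comp _), hF.comp_lift _⟩
  invFun u :=
    have := u.2.1
    have hpb : IsPullback a k f (u.1 ≫ b) :=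
      .of_snd_comp_mono (by rw [u.2.2]; exact hF.isPullback)
    ⟨po.desc f (u.1 ≫ b) hpb.w,
      Adhesive.mono_of_isPushout_of_isPullback_s6 po hpb (po.inl_desc _ _ _) (po.inr_desc _ _ _),
      po.inl_desc _ _ _⟩
  left_inv f₂ := Subtype.ext <| po.hom_ext (by simp [f₂.2.2]) (by simp)
  right_inv u := Subtype.ext <| by
    dsimp only
    exact (hF.lift_unique _ (po.inr_desc _ _ _).symm u.2.2).symm

end Extensions

theorem correspondence_of_matches_general [Adhesive C] {L R S T G H : C}
    (α : Rule L R) (β : Rule G H) (γ : Rule S T)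
    (f : L ⟶ G) (f₁ : L ⟶ S) (g : R ⟶ H) (g₁ : R ⟶ T)
    [Mono f] [Mono g]
    (h1 : IsDerivation α f g β)
    (h2 : IsDerivation α.rev g₁ f₁ γ.rev)
    (h3 : Derivable α g₁) :
    Nonempty ({f₂ : S ⟶ G // Mono f₂ ∧ f₁ ≫ f₂ = f} ≃
      {g₂ : T ⟶ H // Mono g₂ ∧ g₁ ≫ g₂ = g}) := by
  have := α.mono_left; have := α.mono_right; have := β.mono_left; have := β.mono_right
  obtain ⟨h, -, fpbcL, poR⟩ := h1
  obtain ⟨k, -, fpbcR, poL⟩ : ∃ k : α.K ⟶ γ.K, Mono k ∧ IsFPBC α.right g₁ k γ.right ∧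
    IsPushout α.left k f₁ γ.left := h2
  obtain ⟨_, _, _, -, hderiv⟩ := h3
  obtain ⟨_, -, -, po₀⟩ := hderiv
  have poγ : IsPushout α.right k g₁ γ.right := IsFPBC.isPushout fpbcR po₀
  exact ⟨(poL.monoExtensionsEquiv fpbcL).trans (poγ.monoExtensionsEquiv poR.isFPBC_s6).symm⟩

/-- Correspondence of matches: the factorizations of the match `f` through `f₁` are in
bijection with the factorizations of the comatch `g` through `g₁`. -/
theorem correspondence_of_matches [Adhesive C] {L R S T G H : C}
    (α : Rule L R) (β : Rule G H) (γ : Rule S T)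
    (f : L ⟶ G) (f₁ : L ⟶ S) (g : R ⟶ H) (g₁ : R ⟶ T)
    [Mono f] [Mono f₁] [Mono g] [Mono g₁]
    (h1 : IsDerivation α f g β)
    (h2 : IsDerivation α.rev g₁ f₁ γ.rev)
    (h3 : Derivable α g₁) :
    Nonempty ({f₂ : S ⟶ G // Mono f₂ ∧ f₁ ≫ f₂ = f} ≃
      {g₂ : T ⟶ H // Mono g₂ ∧ g₁ ≫ g₂ = g}) :=
  correspondence_of_matches_general α β γ f f₁ g g₁ h1 h2 h3
end

section
/- Counting cospans via minimal gluings (the consumption term): Let C be an adhesive category, G₁, G₂, H objects of C, and M a complete set of representatives of the isomorphism classes of minimal gluings of G₁ and G₂ (i.e., every minimal gluing of G₁ and G₂ is isomorphic to exactly one element of M). Then the map sending a pair (μ, u), where μ = (μ₁ : G₁ ⟶ Û, μ₂ : G₂ ⟶ Û) ∈ M and u ∈ mchs(Û, H), to the cospan (u ∘ μ₁, u ∘ μ₂) is a bijection from Σ_{μ ∈ M} mchs(Û, H) onto mchs(G₁, H) × mchs(G₂, H). In particular, if all the match sets involved are finite and M is finite, then |mchs(G₁, H)| · |mchs(G₂,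 H)| = Σ_{μ ∈ M} |mchs(Û, H)|. -/
open CategoryTheory Limits

universe v u

variable {C : Type u} [Category.{v} C]

/-!
A cospan of matches `(f₁, f₂)` into `H` factors through the pushout of `f₁` and `f₂` over their
pullback, and in an adhesive category the induced map to `H` is again a match. This "union" gluing
is minimal, and any minimal gluing `gl` with a match `u : gl.U ⟶ H` is isomorphic to the union of
`gl.i₁ ≫ u` and `gl.i₂ ≫ u`, because the comparison map into `gl.U` is a mono through which both
legs factor. Hence the cospan determines the class of `gl`, and its legs are jointly epic, so it
determines `u` too.
-/

namespace Gluing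

attribute [local instance] Gluing.mono₁ Gluing.mono₂

variable {G₁ G₂ H : C}

def compMatch (gl : Gluing G₁ G₂) (u : Mchs gl.U H) : Mchs G₁ H × Mchs G₂ H :=
  haveI := u.2
  (⟨gl.i₁ ≫ u.1, inferInstance⟩, ⟨gl.i₂ ≫ u.1, inferInstance⟩)

variable [Adhesive C]

noncomputable def union (f₁ : G₁ ⟶ H) (f₂ : G₂ ⟶ H) [Mono f₁] [Mono f₂] : Gluing G₁ G₂ where
  U := pushout (pullback.fst f₁ f₂) (pullback.snd f₁ f₂)
  i₁ := pushout.inl _ _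
  i₂ := pushout.inr _ _
  mono₁ := Adhesive.mono_of_isPushout_of_mono_right (IsPushout.of_hasPushout _ _)
  mono₂ := Adhesive.mono_of_isPushout_of_mono_left (IsPushout.of_hasPushout _ _)

section Union

variable (f₁ : G₁ ⟶ H) (f₂ : G₂ ⟶ H) [Mono f₁] [Mono f₂]

noncomputable def unionDesc : (union f₁ f₂).U ⟶ H := pushout.desc f₁ f₂ pullback.condition

instance : Mono (unionDesc f₁ f₂) := Adhesive.desc_mono_of_mono

lemma union_hom_ext {X : C} {x y : (union f₁ f₂).U ⟶ X}
    (h₁ : (union f₁ f₂).i₁ ≫ x = (union f₁ f₂).i₁ ≫ y)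
    (h₂ : (union f₁ f₂).i₂ ≫ x = (union f₁ f₂).i₂ ≫ y) : x = y :=
  pushout.hom_ext h₁ h₂

lemma i₁_unionDesc : (union f₁ f₂).i₁ ≫ unionDesc f₁ f₂ = f₁ := pushout.inl_desc _ _ _

lemma i₂_unionDesc : (union f₁ f₂).i₂ ≫ unionDesc f₁ f₂ = f₂ := pushout.inr_desc _ _ _

lemma union_minimal : (union f₁ f₂).Minimal := by
  rintro V m hm ⟨j₁, hj₁⟩ ⟨j₂, hj₂⟩
  have hj : pullback.fst f₁ f₂ ≫ j₁ = pullback.snd f₁ f₂ ≫ j₂ := by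
    rw [← cancel_mono m, Category.assoc, Category.assoc, hj₁, hj₂]
    exact pushout.condition
  have : IsSplitEpi m := IsSplitEpi.mk' ⟨pushout.desc j₁ j₂ hj, union_hom_ext f₁ f₂
    ((pushout.inl_desc_assoc _ _ _ m).trans (hj₁.trans (Category.comp_id _).symm))
    ((pushout.inr_desc_assoc _ _ _ m).trans (hj₂.trans (Category.comp_id _).symm))⟩
  exact isIso_of_mono_of_isSplitEpi m

end Union

namespace Minimal

variable {gl : Gluing G₁ G₂}

lemma gluingIso_union (hgl : gl.Minimal) {u : gl.U ⟶ H} [Mono u]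
    {f₁ : G₁ ⟶ H} {f₂ : G₂ ⟶ H} [Mono f₁] [Mono f₂]
    (h₁ : gl.i₁ ≫ u = f₁) (h₂ : gl.i₂ ≫ u = f₂) : GluingIso (union f₁ f₂) gl := by
  have hw : pullback.fst f₁ f₂ ≫ gl.i₁ = pullback.snd f₁ f₂ ≫ gl.i₂ := by
    rw [← cancel_mono u, Category.assoc, Category.assoc, h₁, h₂]
    exact pullback.condition
  let t : (union f₁ f₂).U ⟶ gl.U := pushout.desc gl.i₁ gl.i₂ hw
  have ht₁ : (union f₁ f₂).i₁ ≫ t = gl.i₁ := pushout.inl_desc _ _ _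
  have ht₂ : (union f₁ f₂).i₂ ≫ t = gl.i₂ := pushout.inr_desc _ _ _
  have htu : t ≫ u = unionDesc f₁ f₂ := union_hom_ext f₁ f₂
    (by rw [reassoc_of% ht₁, h₁, i₁_unionDesc]) (by rw [reassoc_of% ht₂, h₂, i₂_unionDesc])
  have : Mono t := by
    have : Mono (t ≫ u) := htu ▸ inferInstance
    exact mono_of_mono t u
  have : IsIso t := hgl _ t inferInstance ⟨_, ht₁⟩ ⟨_, ht₂⟩
  exact ⟨asIso t, ht₁, ht₂⟩

lemma hom_ext (hgl : gl.Minimal) (u : gl.U ⟶ H) [Mono u] {X : C} {x y : gl.U ⟶ X}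
    (h₁ : gl.i₁ ≫ x = gl.i₁ ≫ y) (h₂ : gl.i₂ ≫ x = gl.i₂ ≫ y) : x = y := by
  obtain ⟨e, he₁, he₂⟩ := hgl.gluingIso_union (u := u) rfl rfl
  rw [← cancel_epi e.hom]
  exact union_hom_ext _ _ (by simp only [reassoc_of% he₁, h₁])
    (by simp only [reassoc_of% he₂, h₂])

end Minimal

lemma bijective_sigma_compMatch {ι : Type*} (M : ι → Gluing G₁ G₂) (hmin : ∀ i, (M i).Minimal)
    (hrep : ∀ gl : Gluing G₁ G₂, gl.Minimal → ∃! i, GluingIso gl (M i)) :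
    Function.Bijective (fun p : Σ i, Mchs (M i).U H => (M p.1).compMatch p.2) := by
  constructor
  · rintro ⟨i, u, hu⟩ ⟨j, v, hv⟩ h
    simp only [compMatch, Prod.mk.injEq, Subtype.mk.injEq] at h
    obtain ⟨h₁, h₂⟩ := h
    have hi := (hmin i).gluingIso_union h₁ h₂
    have hj := (hmin j).gluingIso_union (u := v) rfl rfl
    obtain rfl : i = j := (hrep _ (union_minimal _ _)).unique hi hj
    obtain rfl : u = v := (hmin i).hom_ext u h₁ h₂
    rfl
  · rintro ⟨⟨f₁, hf₁⟩, ⟨f₂, hf₂⟩⟩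
    obtain ⟨i, ⟨e, he₁, he₂⟩, -⟩ := hrep _ (union_minimal f₁ f₂)
    refine ⟨⟨i, e.inv ≫ unionDesc f₁ f₂, inferInstance⟩,
      Prod.ext (Subtype.ext ?_) (Subtype.ext ?_)⟩
    · change (M i).i₁ ≫ e.inv ≫ unionDesc f₁ f₂ = f₁
      rw [← he₁, Category.assoc, e.hom_inv_id_assoc, i₁_unionDesc]
    · change (M i).i₂ ≫ e.inv ≫ unionDesc f₁ f₂ = f₂
      rw [← he₂, Category.assoc, e.hom_inv_id_assoc, i₂_unionDesc]

end Gluing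

/-- Counting cospans of matches via minimal gluings (the consumption term). -/
theorem counting_cospans_via_minimal_gluings [Adhesive C] {G₁ G₂ H : C}
    {ι : Type} [Fintype ι] (M : ι → Gluing G₁ G₂)
    (hmin : ∀ i, (M i).Minimal)
    (hrep : ∀ gl : Gluing G₁ G₂, gl.Minimal → ∃! i : ι, GluingIso gl (M i)) :
    Function.Bijective
      (fun p : Σ i : ι, Mchs (M i).U H =>
        ((⟨(M p.1).i₁ ≫ p.2.1, by
            haveI := (M p.1).mono₁; haveI := p.2.2; exact inferInstance⟩,
          ⟨(M p.1).i₂ ≫ p.2.1, by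
            haveI := (M p.1).mono₂; haveI := p.2.2; exact inferInstance⟩) :
          Mchs G₁ H × Mchs G₂ H)) ∧
    (Finite (Mchs G₁ H) → Finite (Mchs G₂ H) →
      Nat.card (Mchs G₁ H) * Nat.card (Mchs G₂ H) =
        ∑ i : ι, Nat.card (Mchs (M i).U H)) := by
  have hbij := Gluing.bijective_sigma_compMatch (H := H) M hmin hrep
  refine ⟨hbij, fun _ _ => ?_⟩
  have : ∀ i, Finite (Mchs (M i).U H) :=
    fun i => Finite.of_injective (M i).compMatch (hbij.injective.comp sigma_mk_injective)
  rw [← Nat.card_prod, ← Nat.card_eq_of_bijective _ hbij, Nat.card_sigma]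
end

section
/- Horizontal composition of final pullback complements: Let C be a category and consider morphisms f₁ : A ⟶ B, f₂ : B ⟶ C, g₁ : A ⟶ D, g₂ : B ⟶ E, g₃ : C ⟶ F, h₁ : D ⟶ E, h₂ : E ⟶ F. If (g₁, h₁) is an FPBC of the composable pair (f₁, g₂) and (g₂, h₂) is an FPBC of the composable pair (f₂, g₃), then (g₁, h₂ ∘ h₁) is an FPBC of the composable pair (f₂ ∘ f₁, g₃). -/
/-!
Given a pullback of `g₃` along `f₁'` and a map `p` over `f₁ ≫ f₂`, the right FPBC
yields `u₂ : Q ⟶ E`; by the pullback lemma the square `(p ≫ f₁, g₁', g₂, u₂)` is a pullback,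
so the left FPBC yields `u : Q ⟶ D`. For uniqueness, any competitor `v` satisfies `v ≫ h₁ = u₂` by
uniqueness in the right FPBC, hence `v = u` by uniqueness in the left one.
-/

open CategoryTheory Limits

universe v u

variable {C : Type u} [Category.{v} C]

/-- Horizontal composition of final pullback complements. -/
theorem fpbc_horizontal_comp {A B D E F' : C} {C' : C}
    (f₁ : A ⟶ B) (f₂ : B ⟶ C') (g₁ : A ⟶ D) (g₂ : B ⟶ E) (g₃ : C' ⟶ F')
    (h₁ : D ⟶ E) (h₂ : E ⟶ F')
    (hfpbc₁ : IsFPBC f₁ g₂ g₁ h₁) (hfpbc₂ : IsFPBC f₂ g₃ g₂ h₂) :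
    IsFPBC (f₁ ≫ f₂) g₃ g₁ (h₁ ≫ h₂) := by
  refine ⟨hfpbc₁.isPullback.paste_horiz hfpbc₂.isPullback, ?_⟩
  intro P Q f₁' g₁' g₂' hpb p hp
  obtain ⟨u₂, ⟨hu₂, hgu₂⟩, hu₂_unique⟩ :=
    hfpbc₂.final f₁' g₁' g₂' hpb (p ≫ f₁) (by rw [Category.assoc, hp])
  have hleft : IsPullback (p ≫ f₁) g₁' g₂ u₂ :=
    IsPullback.of_right (by rwa [Category.assoc, hp, hu₂]) hgu₂.symm hfpbc₂.isPullback
  obtain ⟨u, ⟨hu, hgu⟩, hu_unique⟩ := hfpbc₁.final (p ≫ f₁) g₁' u₂ hleft p rfl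
  refine ⟨u, ⟨by rw [← Category.assoc, hu, hu₂], hgu⟩, ?_⟩
  rintro v ⟨hv, hgv⟩
  have hvu₂ : v ≫ h₁ = u₂ := by
    refine hu₂_unique _ ⟨by rwa [Category.assoc], ?_⟩
    rw [← Category.assoc, hgv, Category.assoc, Category.assoc, hfpbc₁.isPullback.w]
  exact hu_unique v ⟨hvu₂, hgv⟩
end
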